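/- With t the formal power series inverse of x = (27/4) t (1-t)^2 (zero constant term), for every n \ge 0 the coefficient of x^n in 1/((1-t)(1-3t)) equals (4/27)^n * binom(3n+1, n). -/

import Mathlib

/-!
Differentiating `x = (27/4) t (1-t)²` gives `(27/4) t' W = 1` with `W = (1-t)(1-3t)`, so the
derivatives of `f = W⁻¹` are polynomials in `t` divided by powers of `W`. Eliminating `t` with
`4(1-x) = (1-3t)²(4-3t)` shows that `f` solves the hypergeometric equation
`18 x(1-x) f'' + (27 - 54x) f' = 16 f`, i.e. `f = ₂F₁(4/3, 2/3; 3/2; x)`. Its coefficients thus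
satisfy `9(n+1)(2n+3) aₙ₊₁ = 2(3n+2)(3n+4) aₙ` with `a₀ = 1`, which is also the ratio of
consecutive terms of `(4/27)ⁿ C(3n+1, n)`.
-/

open PowerSeries

theorem Nat.choose_three_mul_add_one_succ_mul (n : ℕ) :
    (3 * (n + 1) + 1).choose (n + 1) * ((n + 1) * (2 * n + 2) * (2 * n + 3)) =
      (3 * n + 1).choose n * ((3 * n + 2) * (3 * n + 3) * (3 * n + 4)) := by
  apply Nat.cast_injective (R := ℚ)
  push_cast
  rw [Nat.cast_choose ℚ (by omega), Nat.cast_choose ℚ (by omega),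
    show 3 * (n + 1) + 1 - (n + 1) = 2 * n + 1 + 2 by omega, show 3 * n + 1 - n = 2 * n + 1 by omega,
    show 3 * (n + 1) + 1 = 3 * n + 1 + 3 by ring]
  simp only [Nat.factorial_succ]
  push_cast
  field_simp
  ring

namespace PowerSeries

variable {R : Type*} [CommRing R]

theorem derivative_ofNat (n : ℕ) [n.AtLeastTwo] : d⁄dX R (ofNat(n) : R⟦X⟧) = 0 := by
  rw [← Nat.cast_ofNat]
  exact Derivation.map_natCast _ n

theorem coeff_X_mul_derivative (f : R⟦X⟧) (n : ℕ) :
    coeff n (X * d⁄dX R f) = n * coeff n f := by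
  cases n with
  | zero => simp
  | succ n => rw [coeff_succ_X_mul, coeff_derivative, Nat.cast_succ, mul_comm]

theorem coeff_succ_mul_eq_of_ode {f : R⟦X⟧} {p q r s : R}
    (h : C p * X * (1 - X) * d⁄dX R (d⁄dX R f) + (C q - C r * X) * d⁄dX R f = C s * f)
    (n : ℕ) :
    (n + 1) * (p * n + q) * coeff (n + 1) f = (p * n * (n - 1) + r * n + s) * coeff n f := by
  have hX2 : X * X * d⁄dX R (d⁄dX R f) = X * d⁄dX R (X * d⁄dX R f) - X * d⁄dX R f := by
    simp only [Derivation.leibniz, derivative_X, smul_eq_mul]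
    ring
  have h' := congrArg (coeff n) h
  rw [show C p * X * (1 - X) * d⁄dX R (d⁄dX R f) + (C q - C r * X) * d⁄dX R f =
      C p * (X * d⁄dX R (d⁄dX R f)) - C p * (X * X * d⁄dX R (d⁄dX R f))
        + C q * d⁄dX R f - C r * (X * d⁄dX R f) by ring, hX2] at h'
  simp only [map_add, map_sub, coeff_C_mul, mul_sub, coeff_X_mul_derivative,
    coeff_derivative] at h'
  linear_combination h'

end PowerSeries

section

variable {K : Type*} [Field K] [CharZero K]

theorem ode_inv_one_sub_mul_one_sub_three_mul {t : K⟦X⟧} (h0 : constantCoeff t = 0)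
    (ht : C (27 / 4 : K) * t * (1 - t) ^ 2 = X) :
    C 18 * X * (1 - X) * d⁄dX K (d⁄dX K ((1 - t) * (1 - 3 * t))⁻¹)
      + (C 27 - C 54 * X) * d⁄dX K ((1 - t) * (1 - 3 * t))⁻¹
      = C 16 * ((1 - t) * (1 - 3 * t))⁻¹ := by
  set D := d⁄dX K
  set W := (1 - t) * (1 - 3 * t)
  have hW1 : constantCoeff W = 1 := by simp [W, h0]
  have hW0 : W ≠ 0 := fun h => by simp [h] at hW1
  have hf : W⁻¹ * W = 1 := PowerSeries.inv_mul_cancel _ (by simp [hW1])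
  have hX : 27 * t * (1 - t) ^ 2 = 4 * X := by
    rw [← ht, ← mul_assoc, ← mul_assoc, ← map_ofNat C 4, ← map_mul, ← map_ofNat C 27]
    norm_num
  have hX1 : 16 * X * (1 - X) = 27 * t * (4 - 3 * t) * W ^ 2 := by
    linear_combination (-(4 - 4 * X - 27 * t * (1 - t) ^ 2)) * hX
  have hDW : D W = (6 * t - 4) * D t := by
    simp only [W, D, Derivation.leibniz, map_sub, Derivation.map_one_eq_zero, smul_eq_mul,
      derivative_ofNat]
    ring
  have hDt : 27 * D t * W = 4 := by
    have h := congrArg D hX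
    simp only [D, Derivation.leibniz, Derivation.leibniz_pow, map_sub, Derivation.map_one_eq_zero,
      smul_eq_mul, derivative_ofNat, derivative_X, nsmul_eq_mul] at h
    linear_combination h
  have hDf : 27 * D W⁻¹ * W ^ 3 = 4 * (4 - 6 * t) := by
    rw [derivative_inv', hDW]
    linear_combination (-(6 * t - 4) * (W⁻¹ * W) ^ 2) * hDt
      + (-(6 * t - 4) * 4 * (W⁻¹ * W + 1)) * hf
  have hD2f : 729 * D (D W⁻¹) * W ^ 5 = 48 * (4 - 6 * t) ^ 2 - 96 * W := by
    have h := congrArg D hDf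
    simp only [D, Derivation.leibniz, Derivation.leibniz_pow, map_sub, smul_eq_mul, nsmul_eq_mul,
      derivative_ofNat] at h
    rw [hDW] at h
    linear_combination 27 * W ^ 2 * h - 81 * (6 * t - 4) * W * D t * hDf
      + (12 * (4 - 6 * t) ^ 2 - 24 * W) * hDt
  -- `23328 = 729 * 16 * 2`: `729` from `hD2f`, `16` from `hX1`, and `2` makes `54 * X`
  -- a multiple of `4 * X`.
  have hW5 : (23328 : K⟦X⟧) * W ^ 5 ≠ 0 := by
    refine mul_ne_zero ?_ (pow_ne_zero 5 hW0)
    rw [← map_ofNat C]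
    exact (map_ne_zero C).2 (by norm_num)
  refine mul_right_cancel₀ hW5 ?_
  simp only [map_ofNat]
  linear_combination 36 * (729 * D (D W⁻¹) * W ^ 5) * hX1
    + 36 * 27 * t * (4 - 3 * t) * W ^ 2 * hD2f
    + 432 * 27 * (27 * D W⁻¹ * W ^ 3) * W ^ 2 * hX + 432 * (54 - 729 * t * (1 - t) ^ 2) * W ^ 2 * hDf
    - 16 * 23328 * W ^ 4 * hf

theorem eq_pow_mul_choose_of_recurrence {a : ℕ → K} (h0 : a 0 = 1)
    (hrec : ∀ n : ℕ, (n + 1) * (18 * n + 27) * a (n + 1) = (18 * n * (n - 1) + 54 * n + 16) * a n)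
    (n : ℕ) : a n = (4 / 27) ^ n * (3 * n + 1).choose n := by
  induction n with
  | zero => simp [h0]
  | succ n ih =>
    have hbin : ((3 * (n + 1) + 1).choose (n + 1) : K) * ((n + 1) * (2 * n + 2) * (2 * n + 3)) =
        (3 * n + 1).choose n * ((3 * n + 2) * (3 * n + 3) * (3 * n + 4)) := by
      exact_mod_cast Nat.choose_three_mul_add_one_succ_mul n
    have hn : ((n : K) + 1) * (18 * n + 27) * (2 * n + 2) ≠ 0 := by
      exact_mod_cast (by positivity : (n + 1) * (18 * n + 27) * (2 * n + 2) ≠ 0)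
    refine mul_left_cancel₀ hn ?_
    linear_combination (2 * n + 2) * hrec n + (2 * n + 2) * (18 * n * (n - 1) + 54 * n + 16) * ih
      - 9 * (4 / 27) ^ (n + 1) * hbin

end

/-- With `t ∈ ℚ⟦x⟧`, `t(0) = 0`, `x = (27/4) t (1-t)²`:
`[x^n] 1/((1-t)(1-3t)) = (4/27)^n C(3n+1, n)` for all `n ≥ 0`. -/
theorem coeff_f_zero (t : PowerSeries ℚ)
    (h0 : PowerSeries.constantCoeff (R := ℚ) t = 0)
    (ht : PowerSeries.C (R := ℚ) (27 / 4) * t * (1 - t) ^ 2 = PowerSeries.X)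
    (n : ℕ) :
    PowerSeries.coeff (R := ℚ) n (((1 - t) * (1 - 3 * t))⁻¹) =
      (4 / 27 : ℚ) ^ n * (Nat.choose (3 * n + 1) n : ℚ) := by
  refine eq_pow_mul_choose_of_recurrence (a := fun k => coeff k ((1 - t) * (1 - 3 * t))⁻¹) ?_
    (coeff_succ_mul_eq_of_ode (ode_inv_one_sub_mul_one_sub_three_mul h0 ht)) n
  simp [h0]
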